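/- arXiv:1107.1851 — 4 statements merged into one kernel-verified Lean document; each statement's English description precedes it below -/
import Mathlib

section
/- The maximum over π ∈ S_n of the minimum star-transposition factorization length of π equals ⌊3(n−1)/2⌋; equivalently, the diameter of the star graph ST_n (the Cayley graph of S_n with generating set {(1 i) : 2 ≤ i ≤ n}) is ⌊3(n−1)/2⌋. -/
/-
Read a star word as the list of indices `i` of its letters `(z i)`. A point `x ≠ z` is moved
only by the letter `(z x)`, which sends it to the centre `z`. So every point `x ≠ z` moved by
`π` occurs in the word, and if `π` exchanges two points `a, b ≠ z` then one of them occurs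
twice: `a` travels to `b` by entering the centre under `(z a)` and leaving it under a later
`(z b)`, while `b` travels to `a` with these roles exchanged. A product of `⌊(n-1)/2⌋`
disjoint transpositions avoiding `z`, times `(z e)` for the leftover point `e` when `n` is
even, therefore needs `⌊3 (n-1) / 2⌋` letters, which `(z a)(z b)(z a) = (a b)` achieves.

Conversely, a permutation with support of size `s` is a word of length at most `⌊3s/2⌋`, and
`⌊3s/2⌋ - 2` if it moves `z`: when `π z ≠ z`, the letter `(z π⁻¹(z))` shortens the cycle
through `z`, and when `π z = z ≠ π i`, conjugating by `(z i)` moves `z` without changing `s`.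
-/

open Equiv Equiv.Perm Finset

namespace StarGraph

section Pairs

variable {α : Type*}

def pairPoints (ps : List (α × α)) : List α := ps.flatMap fun p => [p.1, p.2]

def pairUp : List α → List (α × α)
  | [] => []
  | [_] => []
  | a :: b :: l => (a, b) :: pairUp l

lemma length_pairUp (l : List α) : (pairUp l).length = l.length / 2 := by
  induction l using pairUp.induct with
  | case1 | case2 => simp [pairUp]
  | case3 a b l ih => simp [pairUp, ih]; omega

lemma pairPoints_pairUp (l : List α) :
    pairPoints (pairUp l) = l.take (2 * (l.length / 2)) := by
  induction l using pairUp.induct with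
  | case1 | case2 => simp [pairUp, pairPoints]
  | case3 a b l ih =>
    rw [pairUp, pairPoints, List.flatMap_cons, ← pairPoints, ih, List.length_cons,
      List.length_cons, show 2 * ((l.length + 1 + 1) / 2) = 2 * (l.length / 2) + 1 + 1 by omega]
    rfl

@[simp] lemma pairPoints_cons (p : α × α) (ps : List (α × α)) :
    pairPoints (p :: ps) = p.1 :: p.2 :: pairPoints ps := rfl

lemma mem_pairPoints {ps : List (α × α)} {p : α × α} (hp : p ∈ ps) :
    p.1 ∈ pairPoints ps ∧ p.2 ∈ pairPoints ps :=
  ⟨List.mem_flatMap.2 ⟨p, hp, by simp⟩, List.mem_flatMap.2 ⟨p, hp, by simp⟩⟩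

lemma fst_ne_snd_of_nodup {ps : List (α × α)} (hps : (pairPoints ps).Nodup) {p : α × α}
    (hp : p ∈ ps) : p.1 ≠ p.2 := by
  simpa using (List.nodup_flatMap.1 hps).1 p hp

lemma mul_length_le_sum_map_pairPoints {ps : List (α × α)} (f : α → ℕ) {k : ℕ}
    (h : ∀ p ∈ ps, k ≤ f p.1 + f p.2) : k * ps.length ≤ ((pairPoints ps).map f).sum := by
  induction ps with
  | nil => simp
  | cons p ps ih =>
    have := h p List.mem_cons_self
    have := ih fun q hq => h q (List.mem_cons_of_mem p hq)
    simp only [pairPoints_cons, List.map_cons, List.sum_cons, List.length_cons]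
    lia

def pairSwapsWord (ps : List (α × α)) : List α := ps.flatMap fun p => [p.1, p.2, p.1]

lemma length_pairSwapsWord (ps : List (α × α)) : (pairSwapsWord ps).length = 3 * ps.length := by
  induction ps with
  | nil => rfl
  | cons p ps ih => simp [pairSwapsWord] at ih ⊢; omega

lemma mem_pairPoints_of_mem_pairSwapsWord {ps : List (α × α)} {i : α}
    (hi : i ∈ pairSwapsWord ps) : i ∈ pairPoints ps := by
  simp only [pairSwapsWord, pairPoints, List.mem_flatMap] at hi ⊢
  obtain ⟨p, hp, hi⟩ := hi
  exact ⟨p, hp, by simp at hi ⊢; tauto⟩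

end Pairs

section StarWords

variable {α : Type*} [DecidableEq α] (z : α)

def starProd (is : List α) : Perm α := (is.map (swap z)).prod

@[simp] lemma starProd_nil : starProd z [] = 1 := rfl

@[simp] lemma starProd_cons (i : α) (is : List α) :
    starProd z (i :: is) = swap z i * starProd z is := by
  simp [starProd]

lemma starProd_append (is js : List α) :
    starProd z (is ++ js) = starProd z is * starProd z js := by
  simp [starProd]

lemma starProd_filter_ne (is : List α) : starProd z (is.filter (· ≠ z)) = starProd z is := by
  induction is with
  | nil => rfl
  | cons i is ih =>
    by_cases h : i = z
    · simp [h, ← ih]; rfl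
    · simp [h, ← ih]

variable {z} {is : List α} {x : α}

lemma starProd_apply_of_notMem (hxz : x ≠ z) (hx : x ∉ is) : starProd z is x = x := by
  induction is with
  | nil => rfl
  | cons i is ih =>
    rw [List.mem_cons, not_or] at hx
    rw [starProd_cons, mul_apply, ih hx.2, swap_apply_of_ne_of_ne hxz hx.1]

lemma eq_of_starProd_apply_eq (hxz : x ≠ z) (hx : x ∉ is) {y : α}
    (h : starProd z is y = x) : y = x :=
  (starProd z is).injective (h.trans (starProd_apply_of_notMem hxz hx).symm)

lemma one_le_count_of_starProd_apply_ne (hxz : x ≠ z) (h : starProd z is x ≠ x) :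
    1 ≤ is.count x :=
  List.count_pos_iff.2 (by_contra fun hx => h (starProd_apply_of_notMem hxz hx))

lemma starProd_apply_ne_self (his : is.Nodup) (hz : z ∉ is) (hx : x ∈ is) :
    starProd z is x ≠ x := by
  induction is with
  | nil => simp at hx
  | cons i is ih =>
    rw [List.nodup_cons] at his
    rw [List.mem_cons, not_or] at hz
    rw [starProd_cons, mul_apply]
    rcases List.mem_cons.1 hx with rfl | hx
    · rw [starProd_apply_of_notMem (Ne.symm hz.1) his.1, swap_apply_right]
      exact hz.1
    · have hix : i ≠ x := fun h => his.1 (h ▸ hx)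
      rcases eq_or_ne (starProd z is x) z with hy | hy
      · rw [hy, swap_apply_left]; exact hix
      · have : starProd z is x ≠ i := fun h =>
          hix (eq_of_starProd_apply_eq (Ne.symm hz.1) his.1 h).symm
        rw [swap_apply_of_ne_of_ne hy this]
        exact ih his.2 hz.2 hx

lemma three_le_count_add_count {a b : α} (haz : a ≠ z) (hbz : b ≠ z) (hab : a ≠ b)
    (ha : starProd z is a = b) (hb : starProd z is b = a) :
    3 ≤ is.count a + is.count b := by
  have h1 := one_le_count_of_starProd_apply_ne haz (ha ▸ hab.symm)
  have h2 := one_le_count_of_starProd_apply_ne hbz (hb ▸ hab)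
  suffices ¬ (is.count a ≤ 1 ∧ is.count b ≤ 1) by omega
  rintro ⟨hca, hcb⟩
  clear h1 h2
  induction is using List.reverseRecOn with
  | nil => exact hab ha
  | append_singleton is i ih =>
    simp only [starProd_append, starProd_cons, starProd_nil, mul_one, mul_apply] at ha hb
    simp only [List.count_append, List.count_singleton] at hca hcb
    by_cases hia : i = a
    · subst hia
      rw [swap_apply_of_ne_of_ne hbz hab.symm] at hb
      exact hab (eq_of_starProd_apply_eq haz (List.count_eq_zero.1 (by simpa using hca)) hb).symm
    by_cases hib : i = b
    · subst hib
      rw [swap_apply_of_ne_of_ne haz hab] at ha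
      exact hab (eq_of_starProd_apply_eq hbz (List.count_eq_zero.1 (by simpa using hcb)) ha)
    rw [swap_apply_of_ne_of_ne haz (Ne.symm hia)] at ha
    rw [swap_apply_of_ne_of_ne hbz (Ne.symm hib)] at hb
    exact ih ha hb (by simpa [hia] using hca) (by simpa [hib] using hcb)

lemma sum_map_count_le_length {vs : List α} (hvs : vs.Nodup) (is : List α) :
    (vs.map is.count).sum ≤ is.length := by
  rw [← List.sum_toFinset _ hvs]
  induction is with
  | nil => simp
  | cons i is ih =>
    simp only [List.count_cons, beq_iff_eq, Finset.sum_add_distrib, List.length_cons]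
    gcongr
    rw [Finset.sum_ite_eq]
    split_ifs <;> simp

def pairSwaps (ps : List (α × α)) : Perm α := (ps.map fun p => swap p.1 p.2).prod

lemma pairSwaps_apply_of_notMem {ps : List (α × α)} {x : α} (hx : x ∉ pairPoints ps) :
    pairSwaps ps x = x := by
  induction ps with
  | nil => rfl
  | cons p ps ih =>
    simp only [pairPoints_cons, List.mem_cons, not_or] at hx
    simp only [pairSwaps, List.map_cons, List.prod_cons, mul_apply] at ih ⊢
    rw [ih hx.2.2, swap_apply_of_ne_of_ne hx.1 hx.2.1]

@[simp] lemma pairSwaps_cons (p : α × α) (ps : List (α × α)) :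
    pairSwaps (p :: ps) = swap p.1 p.2 * pairSwaps ps := by
  simp [pairSwaps]

lemma pairSwaps_apply {ps : List (α × α)} (hps : (pairPoints ps).Nodup) {p : α × α}
    (hp : p ∈ ps) : pairSwaps ps p.1 = p.2 ∧ pairSwaps ps p.2 = p.1 := by
  induction ps with
  | nil => simp at hp
  | cons q ps ih =>
    rw [pairPoints_cons, List.nodup_cons, List.nodup_cons, List.mem_cons, not_or] at hps
    obtain ⟨⟨hq, hq1⟩, hq2, hps⟩ := hps
    simp only [pairSwaps_cons, mul_apply]
    rcases List.mem_cons.1 hp with rfl | hp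
    · rw [pairSwaps_apply_of_notMem hq1, pairSwaps_apply_of_notMem hq2, swap_apply_left,
        swap_apply_right]
      exact ⟨rfl, rfl⟩
    · obtain ⟨hp1, hp2⟩ := mem_pairPoints hp
      rw [(ih hps hp).1, (ih hps hp).2]
      exact ⟨swap_apply_of_ne_of_ne (fun h => hq1 (h ▸ hp2)) (fun h => hq2 (h ▸ hp2)),
        swap_apply_of_ne_of_ne (fun h => hq1 (h ▸ hp1)) (fun h => hq2 (h ▸ hp1))⟩

lemma starProd_pairSwapsWord {ps : List (α × α)} (hps : (pairPoints ps).Nodup)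
    (hz : z ∉ pairPoints ps) : starProd z (pairSwapsWord ps) = pairSwaps ps := by
  induction ps with
  | nil => rfl
  | cons p ps ih =>
    rw [pairPoints_cons, List.nodup_cons, List.nodup_cons, List.mem_cons, not_or] at hps
    simp only [pairPoints_cons, List.mem_cons, not_or] at hz
    have hword : pairSwapsWord (p :: ps) = p.1 :: p.2 :: p.1 :: pairSwapsWord ps := rfl
    have htriple := swap_mul_swap_mul_swap (Ne.symm hz.2.1) (Ne.symm hps.1.1)
    rw [swap_comm p.2] at htriple
    rw [hword, starProd_cons, starProd_cons, starProd_cons, ih hps.2.2 hz.2.2, pairSwaps_cons,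
      ← htriple]
    simp only [mul_assoc]

lemma three_mul_length_add_length_le {ps : List (α × α)} {E is : List α}
    (hnd : (pairPoints ps ++ E).Nodup) (hz : z ∉ pairPoints ps ++ E)
    (h : starProd z is = starProd z E * pairSwaps ps) :
    3 * ps.length + E.length ≤ is.length := by
  rw [List.nodup_append] at hnd
  rw [List.mem_append, not_or] at hz
  have hpair : ∀ p ∈ ps, 3 ≤ is.count p.1 + is.count p.2 := by
    intro p hp
    obtain ⟨hp1, hp2⟩ := mem_pairPoints hp
    have hE1 : p.1 ∉ E := fun h => hnd.2.2 _ hp1 _ h rfl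
    have hE2 : p.2 ∉ E := fun h => hnd.2.2 _ hp2 _ h rfl
    have hz1 : p.1 ≠ z := fun h => hz.1 (h ▸ hp1)
    have hz2 : p.2 ≠ z := fun h => hz.1 (h ▸ hp2)
    obtain ⟨hs1, hs2⟩ := pairSwaps_apply hnd.1 hp
    refine three_le_count_add_count hz1 hz2 (fst_ne_snd_of_nodup hnd.1 hp) ?_ ?_
    · rw [h, mul_apply, hs1, starProd_apply_of_notMem hz2 hE2]
    · rw [h, mul_apply, hs2, starProd_apply_of_notMem hz1 hE1]
  have hmoved : ∀ e ∈ E, 1 ≤ is.count e := by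
    intro e he
    have hez : e ≠ z := fun h => hz.2 (h ▸ he)
    refine one_le_count_of_starProd_apply_ne hez ?_
    rw [h, mul_apply, pairSwaps_apply_of_notMem (fun h => hnd.2.2 _ h _ he rfl)]
    exact starProd_apply_ne_self hnd.2.1 hz.2 he
  have hsum_pairs := mul_length_le_sum_map_pairPoints is.count hpair
  have hsum_E : E.length ≤ (E.map is.count).sum := by
    simpa using List.card_nsmul_le_sum (E.map is.count) 1 (by simpa using hmoved)
  calc 3 * ps.length + E.length
      ≤ ((pairPoints ps).map is.count).sum + (E.map is.count).sum := add_le_add hsum_pairs hsum_E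
    _ = ((pairPoints ps ++ E).map is.count).sum := by simp
    _ ≤ is.length := sum_map_count_le_length (List.nodup_append.2 hnd) is

end StarWords

section UpperBound

variable {α : Type*} [DecidableEq α] [Fintype α] {z : α} {π : Perm α}

def starBound (z : α) (π : Perm α) : ℕ := 3 * #π.support / 2 - if π z = z then 0 else 2

lemma starBound_swap_mul_lt (hz : π z ≠ z) :
    starBound z (swap z (π⁻¹ z) * π) < starBound z π := by
  set i := π⁻¹ z
  have hi : π i = z := π.apply_symm_apply z
  have hiz : i ≠ z := fun h => hz (h ▸ hi)
  have hzs : z ∈ π.support := mem_support.2 hz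
  have his : i ∈ π.support := mem_support.2 (by rw [hi]; exact hiz.symm)
  have hsub : (swap z i * π).support ⊆ π.support.erase i := by
    intro x hx
    rw [mem_support] at hx
    refine mem_erase.2 ⟨?_, mem_support.2 fun hpx => hx ?_⟩
    · rintro rfl
      simp [hi] at hx
    · have hxz : x ≠ z := by rintro rfl; exact hz hpx
      have hxi : x ≠ i := by rintro rfl; exact hiz (hpx.symm.trans hi)
      rw [mul_apply, hpx, swap_apply_of_ne_of_ne hxz hxi]
  have hcard := card_le_card hsub
  rw [card_erase_of_mem his] at hcard
  unfold starBound
  rw [if_neg hz]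
  by_cases hσz : (swap z i * π) z = z
  · have hlt : #(swap z i * π).support < #(π.support.erase i) :=
      card_lt_card ⟨hsub, fun h => notMem_support.2 hσz (h (mem_erase.2 ⟨hiz.symm, hzs⟩))⟩
    rw [card_erase_of_mem his] at hlt
    rw [if_pos hσz]
    omega
  · have hpos : 0 < #(swap z i * π).support := card_pos.2 ⟨z, mem_support.2 hσz⟩
    rw [if_neg hσz]
    omega

lemma starBound_conj {i : α} (hz : π z = z) (hi : π i ≠ i) :
    starBound z (swap z i * π * swap z i) + 2 = starBound z π := by
  have hiz : i ≠ z := fun h => hi (h ▸ hz)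
  have hcard : #(swap z i * π * swap z i).support = #π.support := by
    simpa using card_support_conj (σ := swap z i) (τ := π)
  have hconj : (swap z i * π * swap z i) z ≠ z := by
    have hpi : π i ≠ z := fun h => hiz (π.injective (h.trans hz.symm))
    rw [mul_apply, mul_apply, swap_apply_left, swap_apply_of_ne_of_ne hpi hi]
    exact hpi
  have htwo : 1 < #π.support := one_lt_card_support_of_ne_one fun h => hi (h ▸ rfl)
  unfold starBound
  rw [if_neg hconj, if_pos hz, hcard]
  omega

variable (z) in
lemma exists_starProd_eq (π : Perm α) :
    ∃ is, starProd z is = π ∧ is.length ≤ starBound z π := by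
  induction hb : starBound z π using Nat.strong_induction_on generalizing π with
  | _ b ih =>
  subst hb
  by_cases hz : π z = z
  · by_cases h1 : π = 1
    · exact ⟨[], h1.symm ▸ rfl, by simp⟩
    obtain ⟨i, hi⟩ : ∃ i, π i ≠ i := by
      by_contra! h
      exact h1 (Equiv.ext h)
    have hb := starBound_conj hz hi
    obtain ⟨is, his, hlen⟩ := ih _ (by omega) (swap z i * π * swap z i) rfl
    refine ⟨i :: is ++ [i], ?_, ?_⟩
    · simp [starProd_append, his, ← mul_assoc]
    · simp only [List.length_append, List.length_cons, List.length_nil]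
      omega
  · have hlt := starBound_swap_mul_lt hz
    obtain ⟨is, his, hlen⟩ := ih _ hlt _ rfl
    refine ⟨π⁻¹ z :: is, by rw [starProd_cons, his, swap_mul_self_mul], ?_⟩
    simp only [List.length_cons]
    omega

variable (z) in
lemma starBound_le (π : Perm α) : starBound z π ≤ 3 * (Fintype.card α - 1) / 2 := by
  have hs : #π.support ≤ Fintype.card α := π.support.card_le_univ
  unfold starBound
  split_ifs with hz
  · have : #π.support ≤ Fintype.card α - 1 := by
      calc #π.support ≤ #(univ.erase z) :=
            card_le_card fun x hx =>
              mem_erase.2 ⟨fun h => mem_support.1 hx (h ▸ hz), mem_univ x⟩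
        _ = Fintype.card α - 1 := by rw [card_erase_of_mem (mem_univ z), card_univ]
    omega
  · omega

end UpperBound

section Diameter

variable {α : Type*} [DecidableEq α]

def starLengths (z : α) (π : Perm α) : Set ℕ :=
  {m | ∃ l : List (Perm α),
    (∀ τ ∈ l, ∃ i, i ≠ z ∧ τ = swap z i) ∧ l.prod = π ∧ l.length = m}

lemma mem_starLengths_iff {z : α} {π : Perm α} {m : ℕ} :
    m ∈ starLengths z π ↔
      ∃ is : List α, (∀ i ∈ is, i ≠ z) ∧ starProd z is = π ∧ is.length = m := by
  constructor
  · rintro ⟨l, hl, rfl, rfl⟩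
    induction l with
    | nil => exact ⟨[], by simp, rfl, rfl⟩
    | cons τ l ih =>
      obtain ⟨i, hiz, rfl⟩ := hl τ List.mem_cons_self
      obtain ⟨is, his, hprod, hlen⟩ := ih fun τ hτ => hl τ (List.mem_cons_of_mem _ hτ)
      exact ⟨i :: is, List.forall_mem_cons.2 ⟨hiz, his⟩, by simp [hprod], by simp [hlen]⟩
  · rintro ⟨is, his, rfl, rfl⟩
    exact ⟨is.map (swap z), List.forall_mem_map.2 fun i hi => ⟨i, his i hi, rfl⟩, rfl,
      List.length_map _⟩

variable [Fintype α]

noncomputable def farthestPerm (z : α) : Perm α :=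
  starProd z ((univ.erase z).toList.drop (2 * ((univ.erase z).toList.length / 2))) *
    pairSwaps (pairUp (univ.erase z).toList)

lemma isLeast_starLengths_farthestPerm (z : α) :
    IsLeast (starLengths z (farthestPerm z)) (3 * (Fintype.card α - 1) / 2) := by
  set l := (univ.erase z).toList
  set ps := pairUp l
  set E := l.drop (2 * (l.length / 2))
  have hsplit : pairPoints ps ++ E = l := by rw [pairPoints_pairUp, List.take_append_drop]
  have hnd : (pairPoints ps ++ E).Nodup := hsplit ▸ nodup_toList _
  have hz : z ∉ pairPoints ps ++ E := by simp [hsplit, l]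
  have hlen : 3 * ps.length + E.length = 3 * (Fintype.card α - 1) / 2 := by
    have : l.length = Fintype.card α - 1 := by simp [l, card_erase_of_mem]
    rw [length_pairUp, List.length_drop]
    omega
  refine ⟨mem_starLengths_iff.2 ⟨E ++ pairSwapsWord ps, ?_, ?_, ?_⟩, ?_⟩
  · intro i hi hiz
    apply hz
    rw [List.mem_append] at hi ⊢
    exact hiz ▸ hi.symm.imp_left mem_pairPoints_of_mem_pairSwapsWord
  · rw [starProd_append, starProd_pairSwapsWord (List.nodup_append.1 hnd).1
      fun h => hz (List.mem_append_left _ h)]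
    rfl
  · rw [List.length_append, length_pairSwapsWord, ← hlen]
    ring
  · rintro m hm
    obtain ⟨is, -, his, rfl⟩ := mem_starLengths_iff.1 hm
    exact hlen ▸ three_mul_length_add_length_le hnd hz his

lemma exists_mem_starLengths_le (z : α) (π : Perm α) :
    ∃ m ∈ starLengths z π, m ≤ 3 * (Fintype.card α - 1) / 2 := by
  obtain ⟨is, his, hlen⟩ := exists_starProd_eq z π
  refine ⟨(is.filter (· ≠ z)).length, mem_starLengths_iff.2 ⟨_, ?_, ?_, rfl⟩, ?_⟩
  · intro i hi
    simpa using (List.mem_filter.1 hi).2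
  · rw [starProd_filter_ne, his]
  · calc (is.filter (· ≠ z)).length ≤ is.length := List.length_filter_le _ _
      _ ≤ starBound z π := hlen
      _ ≤ 3 * (Fintype.card α - 1) / 2 := starBound_le z π

theorem isGreatest_isLeast_starLengths (z : α) :
    IsGreatest {k | ∃ π : Perm α, IsLeast (starLengths z π) k}
      (3 * (Fintype.card α - 1) / 2) := by
  refine ⟨⟨farthestPerm z, isLeast_starLengths_farthestPerm z⟩, ?_⟩
  rintro k ⟨π, -, hk⟩
  obtain ⟨m, hm, hle⟩ := exists_mem_starLengths_le z π
  exact (hk hm).trans hle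

end Diameter

end StarGraph

theorem stmt14 (n : ℕ) (hn : 2 ≤ n) :
    IsGreatest {k : ℕ | ∃ π : Equiv.Perm (Fin n),
        IsLeast {m : ℕ | ∃ l : List (Equiv.Perm (Fin n)),
          (∀ τ ∈ l, ∃ i : Fin n, i ≠ (⟨0, by omega⟩ : Fin n) ∧
            τ = Equiv.swap (⟨0, by omega⟩ : Fin n) i) ∧
          l.prod = π ∧ l.length = m} k}
      (3 * (n - 1) / 2) := by
  have := StarGraph.isGreatest_isLeast_starLengths (⟨0, by omega⟩ : Fin n)
  rwa [Fintype.card_fin] at this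
end

section
/- Let T be a tree on n vertices labeled 1,...,n, and let p ∈ S_n be an assignment of markers to vertices. Then p can be sorted to the identity by a sequence of swaps along edges of T using at most c(p) − n + Σ_{i=1}^n d(i, p(i)) swaps, where c(p) is the number of cycles of p (including fixed points) and d(i,j) is the tree distance between vertices i and j. -/
set_option linter.unusedSectionVars false
open SimpleGraph

variable {V : Type*} [DecidableEq V] {G : SimpleGraph V}

lemma tree_path_unique (hT : G.IsTree) {v w : V} (p q : G.Walk v w)
    (hp : p.IsPath) (hq : q.IsPath) : p = q := by
  obtain ⟨r, -, hr⟩ := hT.existsUnique_path v w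
  rw [hr p hp, hr q hq]

lemma tree_path_length (hT : G.IsTree) {v w : V} (p : G.Walk v w)
    (hp : p.IsPath) : p.length = G.dist v w := by
  obtain ⟨q, hq, hql⟩ := (hT.isConnected.preconnected v w).exists_path_of_dist
  rw [tree_path_unique hT p q hp hq, hql]

lemma tree_step (hT : G.IsTree) {v w : V} (hvw : v ≠ w) :
    ∃ s, G.Adj v s ∧ G.dist s w + 1 = G.dist v w ∧
      ∀ y, G.Adj v y → y ≠ s → G.dist y w = G.dist v w + 1 := by
  obtain ⟨P, hP, hPl⟩ := (hT.isConnected.preconnected v w).exists_path_of_dist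
  cases P with
  | nil => exact absurd rfl hvw
  | @cons _ s _ h P' =>
    refine ⟨s, h, ?_, ?_⟩
    · have h1 : P'.length = G.dist s w := tree_path_length hT P' hP.of_cons
      rw [SimpleGraph.Walk.length_cons] at hPl
      omega
    · intro y hy hys
      obtain ⟨Q, hQ, hQl⟩ := (hT.isConnected.preconnected y w).exists_path_of_dist
      by_cases hv : v ∈ Q.support
      · have ht := hQ.takeUntil hv
        have hd := hQ.dropUntil hv
        have hedge : (SimpleGraph.Walk.cons hy.symm SimpleGraph.Walk.nil : G.Walk y v).IsPath := by
          simp [hy.ne']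
        have hTU : Q.takeUntil v hv = SimpleGraph.Walk.cons hy.symm SimpleGraph.Walk.nil :=
          tree_path_unique hT _ _ ht hedge
        have hDU : (Q.dropUntil v hv).length = G.dist v w := tree_path_length hT _ hd
        have hsp := congrArg SimpleGraph.Walk.length (Q.take_spec hv)
        rw [SimpleGraph.Walk.length_append, hTU, hDU] at hsp
        simp only [SimpleGraph.Walk.length_cons, SimpleGraph.Walk.length_nil] at hsp
        omega
      · have hc : (SimpleGraph.Walk.cons hy Q).IsPath := hQ.cons hv
        have heq := tree_path_unique hT _ _ hc hP
        have h2 := congrArg (fun z => SimpleGraph.Walk.getVert z 1) heq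
        simp only [SimpleGraph.Walk.getVert_cons_succ, SimpleGraph.Walk.getVert_zero] at h2
        exact absurd h2 hys

lemma tree_side (hT : G.IsTree) {u v s : V} (huv : G.Adj u v) (hvs : G.Adj v s)
    (hsu : s ≠ u) {w : V} (hw : G.dist w s < G.dist w v) : G.dist w v < G.dist w u := by
  have hwv : v ≠ w := by
    rintro rfl
    rw [SimpleGraph.dist_self] at hw
    omega
  obtain ⟨s₀, hs₀, hd₀, huniq⟩ := tree_step hT hwv
  have hss₀ : s = s₀ := by
    by_contra hne
    have := huniq s hvs hne
    rw [SimpleGraph.dist_comm (u := w) (v := s), this, SimpleGraph.dist_comm (u := v)] at hw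
    omega
  have hu : G.dist u w = G.dist v w + 1 := huniq u huv.symm (by rw [← hss₀]; exact fun h => hsu h.symm)
  rw [SimpleGraph.dist_comm (u := w) (v := v), SimpleGraph.dist_comm (u := w) (v := u), hu]
  omega
set_option linter.unusedSectionVars false
set_option maxHeartbeats 1000000
open Finset

variable {α : Type*} [Fintype α] [DecidableEq α]

/-- orbit finset of a relation -/
def orbF (R : α → α → Prop) [DecidableRel R] (x : α) : Finset α := Finset.univ.filter (R x)

lemma mem_orbF {R : α → α → Prop} [DecidableRel R] {x y : α} : y ∈ orbF R x ↔ R x y := by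
  simp [orbF]

lemma orbF_eq {R : α → α → Prop} [DecidableRel R] (hR : Equivalence R) {x y : α}
    (h : R x y) : orbF R x = orbF R y := by
  ext z; simp only [mem_orbF]
  exact ⟨fun hz => hR.trans (hR.symm h) hz, fun hz => hR.trans h hz⟩

lemma orbF_rel {R : α → α → Prop} [DecidableRel R] (hR : Equivalence R) {x y : α}
    (h : orbF R x = orbF R y) : R x y := by
  have : y ∈ orbF R y := mem_orbF.2 (hR.refl y)
  rw [← h] at this
  exact mem_orbF.1 this

/-- number of classes of a relation -/
def ncl (R : α → α → Prop) [DecidableRel R] : ℕ := (Finset.univ.image (orbF R)).card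

noncomputable def phiF (R Q : α → α → Prop) [DecidableRel R] [DecidableRel Q] :
    Finset α → Finset α := fun s =>
  if h : ∃ x, orbF R x = s then orbF Q h.choose else ∅

lemma phiF_orbF {R Q : α → α → Prop} [DecidableRel R] [DecidableRel Q]
    (hR : Equivalence R) (hQ : Equivalence Q) (hsub : ∀ x y, R x y → Q x y) (x : α) :
    phiF R Q (orbF R x) = orbF Q x := by
  have h : ∃ y, orbF R y = orbF R x := ⟨x, rfl⟩
  rw [phiF, dif_pos h]
  exact orbF_eq hQ (hsub _ _ (orbF_rel hR h.choose_spec))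

/-- coarser relation has fewer classes -/
lemma ncl_le_of_subrel (R Q : α → α → Prop) [DecidableRel R] [DecidableRel Q]
    (hR : Equivalence R) (hQ : Equivalence Q) (hsub : ∀ x y, R x y → Q x y) :
    ncl Q ≤ ncl R := by
  have : Finset.univ.image (orbF Q) = (Finset.univ.image (orbF R)).image (phiF R Q) := by
    rw [Finset.image_image]
    exact Finset.image_congr (fun x _ => (phiF_orbF hR hQ hsub x).symm)
  rw [ncl, this]
  exact Finset.card_image_le.trans_eq rfl

/-- coarser with a genuine merge: strictly fewer classes -/
lemma ncl_lt_of_subrel (R Q : α → α → Prop) [DecidableRel R] [DecidableRel Q]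
    (hR : Equivalence R) (hQ : Equivalence Q) (hsub : ∀ x y, R x y → Q x y)
    (a b : α) (hQab : Q a b) (hRab : ¬ R a b) : ncl Q < ncl R := by
  have himg : Finset.univ.image (orbF Q) = (Finset.univ.image (orbF R)).image (phiF R Q) := by
    rw [Finset.image_image]
    exact Finset.image_congr (fun x _ => (phiF_orbF hR hQ hsub x).symm)
  have hsub2 : (Finset.univ.image (orbF R)).image (phiF R Q) ⊆
      (((Finset.univ.image (orbF R)).erase (orbF R a))).image (phiF R Q) := by
    intro s hs
    rw [Finset.mem_image] at hs
    obtain ⟨t, ht, rfl⟩ := hs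
    rw [Finset.mem_image] at ht
    obtain ⟨x, -, rfl⟩ := ht
    by_cases hx : orbF R x = orbF R a
    · have h1 : phiF R Q (orbF R x) = phiF R Q (orbF R b) := by
        rw [phiF_orbF hR hQ hsub, phiF_orbF hR hQ hsub]
        exact (orbF_eq hQ (hsub _ _ (orbF_rel hR hx))).trans (orbF_eq hQ hQab)
      rw [h1]
      refine Finset.mem_image_of_mem _ (Finset.mem_erase.2
        ⟨fun h => hRab (hR.symm (orbF_rel hR h)), Finset.mem_image_of_mem _ (Finset.mem_univ b)⟩)
    · exact Finset.mem_image_of_mem _ (Finset.mem_erase.2 ⟨hx, Finset.mem_image_of_mem _ (Finset.mem_univ x)⟩)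
  have h1 : ncl Q ≤ ((Finset.univ.image (orbF R)).erase (orbF R a)).card := by
    rw [ncl, himg]
    exact (Finset.card_le_card hsub2).trans Finset.card_image_le
  have h2 : (orbF R a) ∈ Finset.univ.image (orbF R) := Finset.mem_image_of_mem _ (Finset.mem_univ a)
  have := Finset.card_erase_add_one h2
  simp only [ncl] at *
  omega

/-- splitting off one pair costs at most one class -/
lemma ncl_le_join_add_one (Q Q' : α → α → Prop) [DecidableRel Q] [DecidableRel Q']
    (hQ : Equivalence Q) (hQ' : Equivalence Q') (a : α)
    (hsub : ∀ x y, Q x y → Q' x y)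
    (hinj : ∀ x y, Q' x y → Q x y ∨ Q x a ∨ Q y a) :
    ncl Q ≤ ncl Q' + 1 := by
  have hmap : ∀ s ∈ (Finset.univ.image (orbF Q)).erase (orbF Q a),
      phiF Q Q' s ∈ Finset.univ.image (orbF Q') := by
    intro s hs
    obtain ⟨x, -, rfl⟩ := Finset.mem_image.1 (Finset.mem_of_mem_erase hs)
    rw [phiF_orbF hQ hQ' hsub]
    exact Finset.mem_image_of_mem _ (Finset.mem_univ x)
  have hinj2 : Set.InjOn (phiF Q Q') ((Finset.univ.image (orbF Q)).erase (orbF Q a)) := by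
    intro s hs t ht hst
    obtain ⟨x, -, rfl⟩ := Finset.mem_image.1 (Finset.mem_of_mem_erase hs)
    obtain ⟨y, -, rfl⟩ := Finset.mem_image.1 (Finset.mem_of_mem_erase ht)
    rw [phiF_orbF hQ hQ' hsub, phiF_orbF hQ hQ' hsub] at hst
    have hxy := orbF_rel hQ' hst
    rcases hinj x y hxy with h | h | h
    · exact orbF_eq hQ h
    · exact absurd (orbF_eq hQ h) (Finset.mem_erase.1 hs).1
    · exact absurd (orbF_eq hQ h) (Finset.mem_erase.1 ht).1
  have h1 := Finset.card_le_card_of_injOn _ hmap hinj2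
  have h2 : (orbF Q a) ∈ Finset.univ.image (orbF Q) := Finset.mem_image_of_mem _ (Finset.mem_univ a)
  have := Finset.card_erase_add_one h2
  simp only [ncl] at *
  omega
set_option linter.unusedSectionVars false
set_option maxHeartbeats 1000000
open Finset Equiv Equiv.Perm

section relstuff
variable {α : Type*} [Fintype α] [DecidableEq α]

def joinR (Q : α → α → Prop) (a b : α) : α → α → Prop :=
  fun x y => Q x y ∨ (Q x a ∧ Q b y) ∨ (Q x b ∧ Q a y)

lemma joinR_equiv {Q : α → α → Prop} (hQ : Equivalence Q) (a b : α) :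
    Equivalence (joinR Q a b) := by
  constructor
  · exact fun x => Or.inl (hQ.refl x)
  · rintro x y (h | ⟨h1, h2⟩ | ⟨h1, h2⟩)
    · exact Or.inl (hQ.symm h)
    · exact Or.inr (Or.inr ⟨hQ.symm h2, hQ.symm h1⟩)
    · exact Or.inr (Or.inl ⟨hQ.symm h2, hQ.symm h1⟩)
  · rintro x y z (h | ⟨h1, h2⟩ | ⟨h1, h2⟩) (g | ⟨g1, g2⟩ | ⟨g1, g2⟩)
    · exact Or.inl (hQ.trans h g)
    · exact Or.inr (Or.inl ⟨hQ.trans h g1, g2⟩)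
    · exact Or.inr (Or.inr ⟨hQ.trans h g1, g2⟩)
    · exact Or.inr (Or.inl ⟨h1, hQ.trans h2 g⟩)
    · exact Or.inl (hQ.trans h1 (hQ.trans (hQ.symm (hQ.trans h2 g1)) g2))
    · exact Or.inl (hQ.trans h1 g2)
    · exact Or.inr (Or.inr ⟨h1, hQ.trans h2 g⟩)
    · exact Or.inl (hQ.trans h1 g2)
    · exact Or.inl (hQ.trans h1 (hQ.trans (hQ.symm (hQ.trans h2 g1)) g2))

lemma sameCycle_equiv (q : Perm α) : Equivalence q.SameCycle :=
  ⟨fun x => SameCycle.refl q x, fun h => h.symm, fun h g => h.trans g⟩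

lemma sameCycle_fixed {q : Perm α} {x y : α} (h : q.SameCycle x y) (hx : q x = x) : y = x := by
  obtain ⟨i, -, -, hi⟩ := Equiv.Perm.SameCycle.exists_pow_eq _ h
  rw [← hi, Equiv.Perm.pow_apply_eq_self_of_apply_eq_self hx]

/-- CORE: same-cycle relation of `q * swap a b` is contained in the join. -/
lemma sameCycle_mul_swap_le (q : Perm α) (a b : α) {x y : α}
    (h : (q * Equiv.swap a b).SameCycle x y) : joinR q.SameCycle a b x y := by
  obtain ⟨i, -, -, hi⟩ := Equiv.Perm.SameCycle.exists_pow_eq _ h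
  subst hi
  clear h
  induction i with
  | zero => simpa using (joinR_equiv (sameCycle_equiv q) a b).refl x
  | succ k ih =>
    refine (joinR_equiv (sameCycle_equiv q) a b).trans ih ?_
    set z := ((q * Equiv.swap a b) ^ k) x with hz
    have hval : ((q * Equiv.swap a b) ^ (k + 1)) x = q (Equiv.swap a b z) := by
      rw [pow_succ' (q * Equiv.swap a b) k]
      simp [hz, Equiv.Perm.mul_apply]
    rw [hval]
    by_cases hza : z = a
    · rw [hza, Equiv.swap_apply_left]
      exact Or.inr (Or.inl ⟨hza ▸ SameCycle.refl q z, sameCycle_apply_right.2 (SameCycle.refl q b)⟩)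
    · by_cases hzb : z = b
      · rw [hzb, Equiv.swap_apply_right]
        exact Or.inr (Or.inr ⟨hzb ▸ SameCycle.refl q z, sameCycle_apply_right.2 (SameCycle.refl q a)⟩)
      · rw [Equiv.swap_apply_of_ne_of_ne hza hzb]
        exact Or.inl (sameCycle_apply_right.2 (SameCycle.refl q z))

/-- counting classes of the same-cycle relation -/
lemma ncl_sameCycle (q : Perm α) :
    ncl q.SameCycle = q.cycleFactorsFinset.card + (Finset.univ.filter fun x => q x = x).card := by
  classical
  have hunion : (Finset.univ : Finset α) = q.support ∪ (Finset.univ.filter fun x => q x = x) := by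
    ext x
    simp only [Finset.mem_univ, true_iff, Finset.mem_union, Equiv.Perm.mem_support,
      Finset.mem_filter, Finset.mem_univ, true_and]
    tauto
  have hfix : ∀ x ∈ (Finset.univ.filter fun x => q x = x), orbF q.SameCycle x = {x} := by
    intro x hx
    rw [Finset.mem_filter] at hx
    ext y
    simp only [mem_orbF, Finset.mem_singleton]
    exact ⟨fun h => sameCycle_fixed h hx.2, fun h => h ▸ SameCycle.refl q x⟩
  have hsupp : ∀ x ∈ q.support, orbF q.SameCycle x = (q.cycleOf x).support := by
    intro x hx
    ext y
    rw [mem_orbF, Equiv.Perm.mem_support_cycleOf_iff]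
    exact ⟨fun h => ⟨h, hx⟩, fun h => h.1⟩
  have himg : Finset.univ.image (orbF q.SameCycle) =
      (q.support.image (orbF q.SameCycle)) ∪
      ((Finset.univ.filter fun x => q x = x).image (orbF q.SameCycle)) := by
    conv_lhs => rw [hunion]
    exact Finset.image_union _ _
  have h1 : (q.support.image (orbF q.SameCycle)) =
      (q.support.image q.cycleOf).image Equiv.Perm.support := by
    rw [Finset.image_image]
    exact Finset.image_congr (fun x hx => hsupp x hx)
  have hfac : q.support.image q.cycleOf = q.cycleFactorsFinset := by
    ext c
    simp only [Finset.mem_image]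
    constructor
    · rintro ⟨x, hx, rfl⟩
      exact Equiv.Perm.cycleOf_mem_cycleFactorsFinset_iff.2 hx
    · intro hc
      obtain ⟨hcyc, hcq⟩ := Equiv.Perm.mem_cycleFactorsFinset_iff.1 hc
      obtain ⟨x, hx⟩ := Finset.card_pos.1 (lt_of_lt_of_le (by norm_num) hcyc.two_le_card_support)
      refine ⟨x, ?_, (Equiv.Perm.cycle_is_cycleOf hx hc).symm⟩
      rw [Equiv.Perm.mem_support, ← hcq x hx]
      exact Equiv.Perm.mem_support.1 hx
  have hinj : Set.InjOn Equiv.Perm.support (q.cycleFactorsFinset : Set (Perm α)) := by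
    intro c hc c' hc' hcc
    obtain ⟨hcyc, -⟩ := Equiv.Perm.mem_cycleFactorsFinset_iff.1 hc
    obtain ⟨x, hx⟩ := Finset.card_pos.1 (lt_of_lt_of_le (by norm_num) hcyc.two_le_card_support)
    have hx' : x ∈ c'.support := by rw [← hcc]; exact hx
    rw [Equiv.Perm.cycle_is_cycleOf hx hc, Equiv.Perm.cycle_is_cycleOf hx' hc']
  have hcard1 : (q.support.image (orbF q.SameCycle)).card = q.cycleFactorsFinset.card := by
    rw [h1, hfac, Finset.card_image_of_injOn hinj]
  have hcard2 : ((Finset.univ.filter fun x => q x = x).image (orbF q.SameCycle)).card =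
      (Finset.univ.filter fun x => q x = x).card := by
    rw [Finset.image_congr hfix]
    exact Finset.card_image_of_injective _ (fun x y h => Finset.singleton_inj.1 h)
  have hdisj : Disjoint (q.support.image (orbF q.SameCycle))
      ((Finset.univ.filter fun x => q x = x).image (orbF q.SameCycle)) := by
    rw [Finset.disjoint_left]
    rintro s hs hs'
    obtain ⟨x, hx, rfl⟩ := Finset.mem_image.1 hs
    obtain ⟨y, hy, hyx⟩ := Finset.mem_image.1 hs'
    have hcy : (q.cycleOf x).IsCycle := q.isCycle_cycleOf (Equiv.Perm.mem_support.1 hx)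
    have h2 := hcy.two_le_card_support
    rw [← hsupp x hx, ← hyx, hfix y hy, Finset.card_singleton] at h2
    omega
  rw [ncl, himg, Finset.card_union_of_disjoint hdisj, hcard1, hcard2]
end relstuff
section mainpart
open Finset Equiv Equiv.Perm SimpleGraph

variable {α : Type*} [Fintype α] [DecidableEq α]

lemma ncl_mul_swap_le (q : Perm α) (a b : α) :
    ncl (q * Equiv.swap a b).SameCycle ≤ ncl q.SameCycle + 1 := by
  classical
  set q' := q * Equiv.swap a b with hq'
  have hqq : q' * Equiv.swap a b = q := by
    rw [hq', mul_assoc, Equiv.swap_mul_self, mul_one]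
  have hQ := sameCycle_equiv q'
  have hR := sameCycle_equiv q
  have hQ' := joinR_equiv hQ a b
  haveI : DecidableRel (joinR q'.SameCycle a b) := fun x y => by
    unfold joinR; infer_instance
  have hsub1 : ∀ x y, q.SameCycle x y → joinR q'.SameCycle a b x y := by
    intro x y h
    refine sameCycle_mul_swap_le q' a b ?_
    rw [hqq]; exact h
  have h1 : ncl (joinR q'.SameCycle a b) ≤ ncl q.SameCycle :=
    ncl_le_of_subrel _ _ hR hQ' hsub1
  have h2 : ncl q'.SameCycle ≤ ncl (joinR q'.SameCycle a b) + 1 := by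
    refine ncl_le_join_add_one _ _ hQ hQ' a (fun x y h => Or.inl h) ?_
    rintro x y (h | ⟨h1, h2⟩ | ⟨h1, h2⟩)
    · exact Or.inl h
    · exact Or.inr (Or.inl h1)
    · exact Or.inr (Or.inr h2.symm)
  omega

lemma ncl_mul_swap_lt (q : Perm α) (a b : α) (hab : a ≠ b) (hb : q b = b) (ha : q a ≠ a) :
    ncl (q * Equiv.swap a b).SameCycle < ncl q.SameCycle := by
  classical
  set q' := q * Equiv.swap a b with hq'
  have hqq : q' * Equiv.swap a b = q := by
    rw [hq', mul_assoc, Equiv.swap_mul_self, mul_one]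
  have hQ := sameCycle_equiv q'
  have hR := sameCycle_equiv q
  have hQab : q'.SameCycle a b := by
    have : q' a = b := by
      rw [hq', Equiv.Perm.mul_apply, Equiv.swap_apply_left, hb]
    rw [← this]
    exact sameCycle_apply_right.2 (SameCycle.refl q' a)
  have hsub : ∀ x y, q.SameCycle x y → q'.SameCycle x y := by
    intro x y h
    have h' : joinR q'.SameCycle a b x y := by
      refine sameCycle_mul_swap_le q' a b ?_
      rw [hqq]; exact h
    rcases h' with h' | ⟨h1, h2⟩ | ⟨h1, h2⟩
    · exact h'
    · exact h1.trans (hQab.trans h2)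
    · exact h1.trans (hQab.symm.trans h2)
  have hnR : ¬ q.SameCycle a b := by
    intro h
    exact hab (sameCycle_fixed h.symm hb)
  exact ncl_lt_of_subrel _ _ hR hQ hsub a b hQab hnR

variable {n : ℕ}

noncomputable def mes (T : SimpleGraph (Fin n)) (p : Equiv.Perm (Fin n)) : ℤ :=
  (ncl p.SameCycle : ℤ) - n + ∑ i : Fin n, (T.dist i (p i) : ℤ)

lemma support_card_le_sum {T : SimpleGraph (Fin n)} (hT : T.IsTree) (p : Equiv.Perm (Fin n)) :
    (p.support.card : ℤ) ≤ ∑ i : Fin n, (T.dist i (p i) : ℤ) := by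
  calc (p.support.card : ℤ) = ∑ _i ∈ p.support, (1 : ℤ) := by simp
    _ ≤ ∑ i ∈ p.support, (T.dist i (p i) : ℤ) := by
        refine Finset.sum_le_sum fun i hi => ?_
        have : i ≠ p i := fun h => (Equiv.Perm.mem_support.1 hi) h.symm
        have := hT.isConnected.pos_dist_of_ne this
        exact_mod_cast this
    _ ≤ ∑ i : Fin n, (T.dist i (p i) : ℤ) := by
        refine Finset.sum_le_sum_of_subset_of_nonneg (Finset.subset_univ _) ?_
        intro i _ _; positivity

lemma fix_add_support (p : Equiv.Perm (Fin n)) :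
    (Finset.univ.filter fun x => p x = x).card + p.support.card = n := by
  have := Finset.card_filter_add_card_filter_not (s := (Finset.univ : Finset (Fin n)))
    (p := fun x => p x = x)
  simp only [Finset.card_univ, Fintype.card_fin] at this
  have h2 : p.support = Finset.univ.filter fun x => ¬ p x = x := rfl
  rw [h2]
  omega

lemma mes_nonneg {T : SimpleGraph (Fin n)} (hT : T.IsTree) (p : Equiv.Perm (Fin n)) :
    0 ≤ mes T p := by
  have h1 := ncl_sameCycle p
  have h2 := fix_add_support p
  have h3 := support_card_le_sum hT p
  unfold mes
  rw [h1]
  push_cast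
  linarith

lemma sum_dist_mul_swap {T : SimpleGraph (Fin n)} (p : Equiv.Perm (Fin n)) {u v : Fin n}
    (huv : u ≠ v) :
    ∑ i : Fin n, (T.dist i ((p * Equiv.swap u v) i) : ℤ) =
      (∑ i : Fin n, (T.dist i (p i) : ℤ))
        - T.dist u (p u) - T.dist v (p v) + T.dist u (p v) + T.dist v (p u) := by
  classical
  have hvmem : v ∈ Finset.univ.erase u :=
    Finset.mem_erase.2 ⟨fun h => huv h.symm, Finset.mem_univ v⟩
  have split : ∀ f : Fin n → ℤ,
      ∑ i : Fin n, f i = ∑ i ∈ (Finset.univ.erase u).erase v, f i + f v + f u := by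
    intro f
    have h1 := Finset.sum_erase_add Finset.univ f (Finset.mem_univ u)
    have h2 := Finset.sum_erase_add (Finset.univ.erase u) f hvmem
    linarith
  rw [split (fun i => (T.dist i ((p * Equiv.swap u v) i) : ℤ)),
    split (fun i => (T.dist i (p i) : ℤ))]
  have hcong : ∀ i ∈ (Finset.univ.erase u).erase v,
      (T.dist i ((p * Equiv.swap u v) i) : ℤ) = (T.dist i (p i) : ℤ) := by
    intro i hi
    obtain ⟨hiv, hi2⟩ := Finset.mem_erase.1 hi
    obtain ⟨hiu, -⟩ := Finset.mem_erase.1 hi2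
    rw [Equiv.Perm.mul_apply, Equiv.swap_apply_of_ne_of_ne hiu hiv]
  rw [Finset.sum_congr rfl hcong]
  have hu : (p * Equiv.swap u v) u = p v := by
    rw [Equiv.Perm.mul_apply, Equiv.swap_apply_left]
  have hv : (p * Equiv.swap u v) v = p u := by
    rw [Equiv.Perm.mul_apply, Equiv.swap_apply_right]
  rw [hu, hv]
  ring

lemma mes_stepA {T : SimpleGraph (Fin n)} (p : Equiv.Perm (Fin n)) {u v : Fin n}
    (hadj : T.Adj u v) (h1 : T.dist v (p u) < T.dist u (p u))
    (h2 : T.dist u (p v) < T.dist v (p v)) :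
    mes T (p * Equiv.swap u v) ≤ mes T p - 1 := by
  have hsum := sum_dist_mul_swap (T := T) p hadj.ne
  have hncl := ncl_mul_swap_le p u v
  unfold mes
  rw [hsum]
  have h1' : (T.dist v (p u) : ℤ) + 1 ≤ (T.dist u (p u) : ℤ) := by exact_mod_cast h1
  have h2' : (T.dist u (p v) : ℤ) + 1 ≤ (T.dist v (p v) : ℤ) := by exact_mod_cast h2
  have hncl' : (ncl (p * Equiv.swap u v).SameCycle : ℤ) ≤ (ncl p.SameCycle : ℤ) + 1 := by
    exact_mod_cast hncl
  linarith

lemma mes_stepB {T : SimpleGraph (Fin n)} (p : Equiv.Perm (Fin n)) {u v : Fin n}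
    (hadj : T.Adj u v) (h1 : T.dist v (p u) < T.dist u (p u)) (hfix : p v = v) :
    mes T (p * Equiv.swap u v) ≤ mes T p - 1 := by
  have hpu : p u ≠ u := by
    intro h
    rw [h] at h1
    have : T.dist u u = 0 := SimpleGraph.dist_self
    omega
  have hsum := sum_dist_mul_swap (T := T) p hadj.ne
  have hncl := ncl_mul_swap_lt p u v hadj.ne hfix hpu
  unfold mes
  rw [hsum]
  have hdvv : T.dist v (p v) = 0 := by rw [hfix]; exact SimpleGraph.dist_self
  have hduv : T.dist u (p v) ≤ 1 := by
    rw [hfix]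
    have := SimpleGraph.dist_le (SimpleGraph.Walk.cons hadj SimpleGraph.Walk.nil)
    simpa using this
  have h1' : (T.dist v (p u) : ℤ) + 1 ≤ (T.dist u (p u) : ℤ) := by exact_mod_cast h1
  have hncl' : (ncl (p * Equiv.swap u v).SameCycle : ℤ) + 1 ≤ (ncl p.SameCycle : ℤ) := by
    exact_mod_cast hncl
  have hdvv' : (T.dist v (p v) : ℤ) = 0 := by exact_mod_cast hdvv
  have hduv' : (T.dist u (p v) : ℤ) ≤ 1 := by exact_mod_cast hduv
  linarith

lemma walkrec {T : SimpleGraph (Fin n)} (hT : T.IsTree) (p : Equiv.Perm (Fin n)) :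
    ∀ k (u v : Fin n), T.Adj u v → T.dist v (p u) + 1 = T.dist u (p u) →
      (Finset.univ.filter fun w => T.dist w v < T.dist w u).card ≤ k →
      ∃ a b, T.Adj a b ∧ T.dist b (p a) < T.dist a (p a) ∧
        (T.dist a (p b) < T.dist b (p b) ∨ p b = b) := by
  intro k
  induction k with
  | zero =>
    intro u v hadj hd hcard
    exfalso
    have hvmem : v ∈ Finset.univ.filter fun w => T.dist w v < T.dist w u := by
      rw [Finset.mem_filter]
      refine ⟨Finset.mem_univ v, ?_⟩
      rw [SimpleGraph.dist_self]
      exact hT.isConnected.pos_dist_of_ne hadj.ne'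
    have := Finset.card_pos.2 ⟨v, hvmem⟩
    omega
  | succ k ih =>
    intro u v hadj hd hcard
    by_cases hfix : p v = v
    · exact ⟨u, v, hadj, by omega, Or.inr hfix⟩
    by_cases hcross : T.dist u (p v) < T.dist v (p v)
    · exact ⟨u, v, hadj, by omega, Or.inl hcross⟩
    obtain ⟨s, hvs, hds, huniq⟩ := tree_step hT (show v ≠ p v from fun h => hfix h.symm)
    have hsu : s ≠ u := by
      rintro rfl
      omega
    refine ih v s hvs hds ?_
    have hsubset : (Finset.univ.filter fun w => T.dist w s < T.dist w v) ⊆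
        (Finset.univ.filter fun w => T.dist w v < T.dist w u) := by
      intro w hw
      rw [Finset.mem_filter] at hw ⊢
      exact ⟨hw.1, tree_side hT hadj hvs hsu hw.2⟩
    have hvnot : v ∉ (Finset.univ.filter fun w => T.dist w s < T.dist w v) := by
      rw [Finset.mem_filter, SimpleGraph.dist_self]
      push_neg
      intro
      omega
    have hvin : v ∈ (Finset.univ.filter fun w => T.dist w v < T.dist w u) := by
      rw [Finset.mem_filter]
      refine ⟨Finset.mem_univ v, ?_⟩
      rw [SimpleGraph.dist_self]
      exact hT.isConnected.pos_dist_of_ne hadj.ne'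
    have := Finset.card_lt_card (Finset.ssubset_iff_of_subset hsubset |>.2 ⟨v, hvin, hvnot⟩)
    omega

lemma step_exists {T : SimpleGraph (Fin n)} (hT : T.IsTree) (p : Equiv.Perm (Fin n))
    (hp : p ≠ 1) : ∃ a b : Fin n, T.Adj a b ∧
      mes T (p * Equiv.swap a b) ≤ mes T p - 1 := by
  have : ∃ u, p u ≠ u := by
    by_contra h
    push_neg at h
    exact hp (Equiv.ext h)
  obtain ⟨u, hu⟩ := this
  obtain ⟨s, hus, hds, -⟩ := tree_step hT (show u ≠ p u from fun h => hu h.symm)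
  obtain ⟨a, b, hadj, h1, h2⟩ := walkrec hT p
    (Finset.univ.filter fun w => T.dist w s < T.dist w u).card u s hus hds le_rfl
  refine ⟨a, b, hadj, ?_⟩
  rcases h2 with h2 | h2
  · exact mes_stepA p hadj h1 h2
  · exact mes_stepB p hadj h1 h2

lemma sortaux {T : SimpleGraph (Fin n)} (hT : T.IsTree) :
    ∀ N (p : Equiv.Perm (Fin n)), (mes T p).toNat ≤ N →
    ∃ l : List (Equiv.Perm (Fin n)),
      (∀ τ ∈ l, ∃ u v : Fin n, T.Adj u v ∧ τ = Equiv.swap u v) ∧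
      p * l.prod = 1 ∧ (l.length : ℤ) ≤ mes T p := by
  intro N
  induction N with
  | zero =>
    intro p hp
    by_cases h1 : p = 1
    · subst h1
      refine ⟨[], by simp, by simp, ?_⟩
      simp only [List.length_nil, Nat.cast_zero]
      exact mes_nonneg hT 1
    · exfalso
      obtain ⟨a, b, -, hstep⟩ := step_exists hT p h1
      have := mes_nonneg hT (p * Equiv.swap a b)
      omega
  | succ N ih =>
    intro p hp
    by_cases h1 : p = 1
    · subst h1
      refine ⟨[], by simp, by simp, ?_⟩
      simp only [List.length_nil, Nat.cast_zero]
      exact mes_nonneg hT 1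
    · obtain ⟨a, b, hadj, hstep⟩ := step_exists hT p h1
      have hnn := mes_nonneg hT (p * Equiv.swap a b)
      obtain ⟨l', hmem, hprod, hlen⟩ := ih (p * Equiv.swap a b) (by omega)
      refine ⟨Equiv.swap a b :: l', ?_, ?_, ?_⟩
      · intro τ hτ
        rcases List.mem_cons.1 hτ with rfl | h
        · exact ⟨a, b, hadj, rfl⟩
        · exact hmem τ h
      · rw [List.prod_cons, ← mul_assoc]
        exact hprod
      · simp only [List.length_cons]
        push_cast
        linarith

end mainpart

theorem stmt16 (n : ℕ) (T : SimpleGraph (Fin n)) (hT : T.IsTree)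
    (p : Equiv.Perm (Fin n)) :
    ∃ l : List (Equiv.Perm (Fin n)),
      (∀ τ ∈ l, ∃ u v : Fin n, T.Adj u v ∧ τ = Equiv.swap u v) ∧
      p * l.prod = 1 ∧
      (l.length : ℤ) ≤
        ((p.cycleFactorsFinset.card +
            (Finset.univ.filter fun x => p x = x).card : ℕ) : ℤ)
          - n + ∑ i : Fin n, (T.dist i (p i) : ℤ) := by
  obtain ⟨l, hmem, hprod, hlen⟩ := sortaux hT (mes T p).toNat p le_rfl
  refine ⟨l, hmem, hprod, ?_⟩
  have : mes T p = ((p.cycleFactorsFinset.card +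
      (Finset.univ.filter fun x => p x = x).card : ℕ) : ℤ)
      - n + ∑ i : Fin n, (T.dist i (p i) : ℤ) := by
    unfold mes
    rw [ncl_sameCycle]
  linarith
end

section
/- If p ∈ S_n is not the identity, then for any assignment of markers to the vertices of a tree T (markers i placed at vertex p(i)-style), there exists an edge {u,v} of T such that swapping the markers at u and v strictly decreases the quantity c(p) − n + Σ_{i=1}^n d(i, p(i)). -/
namespace Stmt17Aux

open Equiv Equiv.Perm Finset

variable {n : ℕ}

/-- the set of minimal representatives of classes of `R` -/
noncomputable def mins (R : Fin n → Fin n → Prop) : Finset (Fin n) :=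
  @Finset.filter _ (fun x => ∀ y, R x y → x ≤ y) (fun _ => Classical.dec _) Finset.univ

lemma mem_mins {R : Fin n → Fin n → Prop} {x : Fin n} :
    x ∈ mins R ↔ ∀ y, R x y → x ≤ y := by
  simp [mins]

lemma mins_anti {R R' : Fin n → Fin n → Prop} (h : ∀ x y, R x y → R' x y) :
    mins R' ⊆ mins R := by
  intro x hx
  rw [mem_mins] at hx ⊢
  exact fun y hy => hx y (h _ _ hy)

lemma fixed_mem_mins {p : Perm (Fin n)} {x : Fin n} (hx : p x = x) :
    x ∈ mins p.SameCycle := by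
  rw [mem_mins]
  rintro y ⟨k, rfl⟩
  rw [zpow_apply_eq_self_of_apply_eq_self hx]

lemma eq_of_mem_mins {p : Perm (Fin n)} {x y : Fin n} (hx : x ∈ mins p.SameCycle)
    (hy : y ∈ mins p.SameCycle) (h : p.SameCycle x y) : x = y :=
  le_antisymm (mem_mins.1 hx y h) (mem_mins.1 hy x h.symm)

lemma card_mins (p : Perm (Fin n)) :
    (mins p.SameCycle).card =
      p.cycleFactorsFinset.card + (Finset.univ.filter fun x => p x = x).card := by
  classical
  have hsplit := Finset.card_filter_add_card_filter_not
    (s := mins p.SameCycle) (p := fun x => p x = x)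
  have h1 : ((mins p.SameCycle).filter fun x => p x = x) =
      (Finset.univ.filter fun x => p x = x) := by
    apply Finset.ext
    intro x
    simp only [Finset.mem_filter, Finset.mem_univ, true_and]
    exact ⟨fun h => h.2, fun h => ⟨fixed_mem_mins h, h⟩⟩
  have h2 : ((mins p.SameCycle).filter fun x => ¬ p x = x).card =
      p.cycleFactorsFinset.card := by
    apply Finset.card_bij (fun x _ => p.cycleOf x)
    · intro a ha
      rw [Finset.mem_filter] at ha
      exact cycleOf_mem_cycleFactorsFinset_iff.mpr (mem_support.mpr ha.2)
    · intro a ha b hb hab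
      rw [Finset.mem_filter] at ha hb
      have hbmem : b ∈ (p.cycleOf b).support :=
        mem_support_cycleOf_iff.mpr ⟨SameCycle.refl _ _, mem_support.2 hb.2⟩
      rw [← hab] at hbmem
      have hsc : p.SameCycle a b := (mem_support_cycleOf_iff.mp hbmem).1
      exact eq_of_mem_mins ha.1 hb.1 hsc
    · intro c hc
      obtain ⟨x, hx, -⟩ := (mem_cycleFactorsFinset_iff.mp hc).1
      have hne : c.support.Nonempty := ⟨x, mem_support.2 hx⟩
      set m := c.support.min' hne with hm
      have hmmem : m ∈ c.support := Finset.min'_mem _ _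
      have hceq : c = p.cycleOf m := cycle_is_cycleOf hmmem hc
      have hmp : p m ≠ m :=
        mem_support.mp (mem_cycleFactorsFinset_support_le hc hmmem)
      refine ⟨m, ?_, hceq.symm⟩
      rw [Finset.mem_filter]
      refine ⟨mem_mins.mpr fun y hy => ?_, hmp⟩
      have : y ∈ c.support := by
        rw [hceq]
        exact mem_support_cycleOf_iff.mpr ⟨hy, mem_support.2 hmp⟩
      exact Finset.min'_le _ _ this
  rw [← hsplit, h1, h2, Nat.add_comm]

lemma sameCycle_le {q : Perm (Fin n)} {S : Fin n → Fin n → Prop}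
    (hrefl : ∀ x, S x x) (htrans : ∀ {x y z : Fin n}, S x y → S y z → S x z)
    (hstep : ∀ x, S x (q x)) {x y : Fin n} (h : q.SameCycle x y) : S x y := by
  obtain ⟨i, -, rfl⟩ := h.exists_pow_eq'
  clear h
  induction i with
  | zero => simpa using hrefl x
  | succ k ih =>
    rw [pow_succ']
    exact htrans ih (hstep _)

/-- the relation obtained from the cycle relation by merging the classes of u and v -/
def S (p : Perm (Fin n)) (u v : Fin n) (x y : Fin n) : Prop :=
  p.SameCycle x y ∨ (p.SameCycle x u ∧ p.SameCycle v y) ∨ (p.SameCycle x v ∧ p.SameCycle u y)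

lemma S_refl (p : Perm (Fin n)) (u v x : Fin n) : S p u v x x := Or.inl (SameCycle.refl _ _)

lemma sc_le_S (p : Perm (Fin n)) (u v : Fin n) {x y : Fin n} (h : p.SameCycle x y) :
    S p u v x y := Or.inl h

lemma S_trans {p : Perm (Fin n)} {u v x y z : Fin n} (h1 : S p u v x y) (h2 : S p u v y z) :
    S p u v x z := by
  rcases h1 with h1 | ⟨ha, hb⟩ | ⟨ha, hb⟩ <;>
    rcases h2 with h2 | ⟨hc, hd⟩ | ⟨hc, hd⟩
  · exact Or.inl (h1.trans h2)
  · exact Or.inr (Or.inl ⟨h1.trans hc, hd⟩)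
  · exact Or.inr (Or.inr ⟨h1.trans hc, hd⟩)
  · exact Or.inr (Or.inl ⟨ha, hb.trans h2⟩)
  · exact Or.inl (ha.trans ((hb.trans hc).symm.trans hd))
  · exact Or.inl (ha.trans hd)
  · exact Or.inr (Or.inr ⟨ha, hb.trans h2⟩)
  · exact Or.inl (ha.trans hd)
  · exact Or.inl (ha.trans ((hb.trans hc).symm.trans hd))

lemma S_uv (p : Perm (Fin n)) (u v : Fin n) : S p u v u v :=
  Or.inr (Or.inl ⟨SameCycle.refl _ _, SameCycle.refl _ _⟩)

lemma S_vu (p : Perm (Fin n)) (u v : Fin n) : S p u v v u :=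
  Or.inr (Or.inr ⟨SameCycle.refl _ _, SameCycle.refl _ _⟩)

lemma scq_le_S (p : Perm (Fin n)) (u v : Fin n) {x y : Fin n}
    (h : (p * Equiv.swap u v).SameCycle x y) : S p u v x y := by
  refine sameCycle_le (S_refl p u v) S_trans (fun x => ?_) h
  rcases eq_or_ne x u with rfl | hxu
  · have hx : (p * Equiv.swap x v) x = p v := by simp
    rw [hx]
    exact Or.inr (Or.inl ⟨SameCycle.refl _ _, ⟨1, by simp⟩⟩)
  rcases eq_or_ne x v with rfl | hxv
  · have hx : (p * Equiv.swap u x) x = p u := by simp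
    rw [hx]
    exact Or.inr (Or.inr ⟨SameCycle.refl _ _, ⟨1, by simp⟩⟩)
  · have hx : (p * Equiv.swap u v) x = p x := by
      simp [Equiv.Perm.mul_apply, Equiv.swap_apply_of_ne_of_ne hxu hxv]
    rw [hx]
    exact Or.inl ⟨1, by simp⟩

lemma Sq_le_S (p : Perm (Fin n)) (u v : Fin n) {x y : Fin n}
    (h : S (p * Equiv.swap u v) u v x y) : S p u v x y := by
  rcases h with h | ⟨ha, hb⟩ | ⟨ha, hb⟩
  · exact scq_le_S p u v h
  · exact S_trans (S_trans (scq_le_S p u v ha) (S_uv p u v)) (scq_le_S p u v hb)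
  · exact S_trans (S_trans (scq_le_S p u v ha) (S_vu p u v)) (scq_le_S p u v hb)

lemma S_swap_eq (p : Perm (Fin n)) (u v : Fin n) :
    S (p * Equiv.swap u v) u v = S p u v := by
  funext x y
  ext
  constructor
  · exact Sq_le_S p u v
  · intro h
    have h2 := Sq_le_S (p * Equiv.swap u v) u v (x := x) (y := y)
    rw [mul_assoc, Equiv.swap_mul_self, mul_one] at h2
    exact h2 h

/-- merging two classes loses at most one minimum -/
lemma card_mins_le_S (p : Perm (Fin n)) (u v : Fin n) :
    (mins p.SameCycle).card ≤ (mins (S p u v)).card + 1 := by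
  classical
  have hclass : ∀ x : Fin n, x ∈ mins p.SameCycle → x ∉ mins (S p u v) →
      p.SameCycle x u ∨ p.SameCycle x v := by
    intro x hx hnx
    rw [mem_mins] at hnx
    push_neg at hnx
    obtain ⟨y, hy, hlt⟩ := hnx
    rcases hy with hy | ⟨ha, -⟩ | ⟨ha, -⟩
    · exact absurd (mem_mins.1 hx y hy) (not_le.mpr hlt)
    · exact Or.inl ha
    · exact Or.inr ha
  have key : ∀ x1 x2 : Fin n, x1 ∈ mins p.SameCycle → x2 ∈ mins p.SameCycle →
      x1 ∉ mins (S p u v) → x2 ∉ mins (S p u v) → x1 ≤ x2 → x1 = x2 := by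
    intro x1 x2 h1 h2 hn1 hn2 hle
    by_contra hne
    rcases hclass x1 h1 hn1 with h1u | h1v <;> rcases hclass x2 h2 hn2 with h2u | h2v
    · exact hne (eq_of_mem_mins h1 h2 (h1u.trans h2u.symm))
    · refine hn1 (mem_mins.mpr fun y hy => ?_)
      rcases hy with hy | ⟨-, hb⟩ | ⟨ha, -⟩
      · exact mem_mins.1 h1 y hy
      · exact le_trans hle (mem_mins.1 h2 y (h2v.trans hb))
      · exact absurd (eq_of_mem_mins h1 h2 (ha.trans h2v.symm)) hne
    · refine hn1 (mem_mins.mpr fun y hy => ?_)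
      rcases hy with hy | ⟨ha, -⟩ | ⟨-, hb⟩
      · exact mem_mins.1 h1 y hy
      · exact absurd (eq_of_mem_mins h1 h2 (ha.trans h2u.symm)) hne
      · exact le_trans hle (mem_mins.1 h2 y (h2u.trans hb))
    · exact hne (eq_of_mem_mins h1 h2 (h1v.trans h2v.symm))
  have hD : (mins p.SameCycle \ mins (S p u v)).card ≤ 1 := by
    refine Finset.card_le_one.mpr fun a ha b hb => ?_
    rw [Finset.mem_sdiff] at ha hb
    rcases le_total a b with h | h
    · exact key a b ha.1 hb.1 ha.2 hb.2 h
    · exact (key b a hb.1 ha.1 hb.2 ha.2 h).symm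
  have hsub : mins p.SameCycle ⊆ mins (S p u v) ∪ (mins p.SameCycle \ mins (S p u v)) := by
    intro x hx
    rw [Finset.mem_union, Finset.mem_sdiff]
    by_cases h : x ∈ mins (S p u v) <;> tauto
  calc (mins p.SameCycle).card
      ≤ (mins (S p u v) ∪ (mins p.SameCycle \ mins (S p u v))).card := Finset.card_le_card hsub
    _ ≤ (mins (S p u v)).card + (mins p.SameCycle \ mins (S p u v)).card :=
        Finset.card_union_le _ _
    _ ≤ (mins (S p u v)).card + 1 := by omega

lemma card_split (p : Perm (Fin n)) (u v : Fin n) :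
    (mins (p * Equiv.swap u v).SameCycle).card ≤ (mins p.SameCycle).card + 1 := by
  calc (mins (p * Equiv.swap u v).SameCycle).card
      ≤ (mins (S (p * Equiv.swap u v) u v)).card + 1 := card_mins_le_S _ u v
    _ = (mins (S p u v)).card + 1 := by rw [S_swap_eq]
    _ ≤ (mins p.SameCycle).card + 1 := by
        exact Nat.add_le_add_right (Finset.card_le_card (mins_anti fun x y => sc_le_S p u v)) 1

lemma card_merge (p : Perm (Fin n)) {v w : Fin n} (hw : p w = w) (hvw : v ≠ w) :
    (mins (p * Equiv.swap v w).SameCycle).card + 1 ≤ (mins p.SameCycle).card := by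
  classical
  set q := p * Equiv.swap v w with hq
  have hqv : q v = w := by simp [hq, hw]
  have hqw : q w = p v := by simp [hq]
  have hstep : ∀ x, q.SameCycle x (p x) := by
    intro x
    rcases eq_or_ne x v with rfl | hxv
    · have hx : p x = q (q x) := by rw [hqv, hqw]
      rw [hx]
      have hs1 : q.SameCycle x (q x) := ⟨1, by simp⟩
      have hs2 : q.SameCycle (q x) (q (q x)) := ⟨1, by simp⟩
      exact hs1.trans hs2
    rcases eq_or_ne x w with rfl | hxw
    · rw [hw]
    · have hx : p x = q x := by
        simp [hq, Equiv.Perm.mul_apply, Equiv.swap_apply_of_ne_of_ne hxv hxw]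
      rw [hx]
      exact ⟨1, by simp⟩
  have hle : ∀ x y : Fin n, p.SameCycle x y → q.SameCycle x y := fun x y h =>
    sameCycle_le (SameCycle.refl q) (fun h1 h2 => h1.trans h2) hstep h
  have hsub : mins q.SameCycle ⊆ mins p.SameCycle := mins_anti hle
  have hwmin : w ∈ mins p.SameCycle := fixed_mem_mins hw
  have hvne : (Finset.univ.filter fun y => p.SameCycle v y).Nonempty :=
    ⟨v, by simp [SameCycle.refl]⟩
  set m := (Finset.univ.filter fun y => p.SameCycle v y).min' hvne with hmdef
  have hmmem : p.SameCycle v m := by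
    have h := Finset.min'_mem _ hvne
    rw [Finset.mem_filter] at h
    exact h.2
  have hmmin : m ∈ mins p.SameCycle := by
    refine mem_mins.mpr fun y hy => ?_
    exact Finset.min'_le _ _ (by rw [Finset.mem_filter]; exact ⟨Finset.mem_univ _, hmmem.trans hy⟩)
  have hmw : m ≠ w := by
    intro h
    rw [h] at hmmem
    obtain ⟨k, hk⟩ := hmmem.symm
    rw [zpow_apply_eq_self_of_apply_eq_self hw] at hk
    exact hvw hk.symm
  have hscqwm : q.SameCycle w m := by
    have h1 : q.SameCycle v w := ⟨1, by simpa using hqv⟩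
    exact h1.symm.trans (hle _ _ hmmem)
  have hnot : w ∉ mins q.SameCycle ∨ m ∉ mins q.SameCycle := by
    by_contra hcon
    push_neg at hcon
    exact hmw (eq_of_mem_mins hcon.1 hcon.2 hscqwm).symm
  obtain ⟨z, hzp, hzq⟩ : ∃ z, z ∈ mins p.SameCycle ∧ z ∉ mins q.SameCycle := by
    rcases hnot with h | h
    · exact ⟨w, hwmin, h⟩
    · exact ⟨m, hmmin, h⟩
  have herase : mins q.SameCycle ⊆ (mins p.SameCycle).erase z := by
    intro x hx
    rw [Finset.mem_erase]
    exact ⟨fun h => hzq (h ▸ hx), hsub hx⟩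
  have h1 := Finset.card_le_card herase
  rw [Finset.card_erase_of_mem hzp] at h1
  have h2 : 1 ≤ (mins p.SameCycle).card := Finset.card_pos.mpr ⟨z, hzp⟩
  omega




open SimpleGraph

set_option linter.unusedSectionVars false

variable {V : Type*} [DecidableEq V] {G : SimpleGraph V}

lemma exists_closer (hc : G.Connected) {x y : V} (hxy : x ≠ y) :
    ∃ w, G.Adj x w ∧ G.dist w y + 1 = G.dist x y := by
  obtain ⟨W, hW⟩ := hc.exists_walk_length_eq_dist x y
  cases W with
  | nil => exact absurd rfl hxy
  | @cons _ w _ h W' =>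
    refine ⟨w, h, ?_⟩
    have h1 : G.dist w y ≤ W'.length := SimpleGraph.dist_le W'
    have h2 : G.dist x y ≤ G.dist x w + G.dist w y := hc.dist_triangle
    have h3 : G.dist x w ≤ 1 := by
      have := SimpleGraph.dist_le (Walk.cons h Walk.nil)
      simpa using this
    rw [Walk.length_cons] at hW
    omega

lemma exists_path_length (hc : G.Connected) (x y : V) :
    ∃ P : G.Walk x y, P.IsPath ∧ P.length = G.dist x y := by
  obtain ⟨W, hW⟩ := hc.exists_walk_length_eq_dist x y
  refine ⟨W.bypass, W.bypass_isPath, le_antisymm ?_ (SimpleGraph.dist_le _)⟩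
  calc W.bypass.length ≤ W.length := W.length_bypass_le
    _ = G.dist x y := hW

lemma closer_unique (hT : G.IsTree) {x y w1 w2 : V} (h1 : G.Adj x w1) (h2 : G.Adj x w2)
    (hd1 : G.dist w1 y + 1 = G.dist x y) (hd2 : G.dist w2 y + 1 = G.dist x y) : w1 = w2 := by
  obtain ⟨Q1, hQ1p, hQ1l⟩ := exists_path_length hT.isConnected w1 y
  obtain ⟨Q2, hQ2p, hQ2l⟩ := exists_path_length hT.isConnected w2 y
  have hx1 : x ∉ Q1.support := by
    intro hmem
    have ha := SimpleGraph.dist_le (Q1.dropUntil x hmem)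
    have hb := Walk.length_dropUntil_le Q1 hmem
    omega
  have hx2 : x ∉ Q2.support := by
    intro hmem
    have ha := SimpleGraph.dist_le (Q2.dropUntil x hmem)
    have hb := Walk.length_dropUntil_le Q2 hmem
    omega
  have hP1 : (Walk.cons h1 Q1).IsPath := hQ1p.cons hx1
  have hP2 : (Walk.cons h2 Q2).IsPath := hQ2p.cons hx2
  obtain ⟨P, -, huniq⟩ := hT.existsUnique_path x y
  have he : Walk.cons h1 Q1 = Walk.cons h2 Q2 := (huniq _ hP1).trans (huniq _ hP2).symm
  have hs := congrArg Walk.support he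
  rw [Walk.support_cons, Walk.support_cons, Q1.support_eq_cons, Q2.support_eq_cons] at hs
  have := (List.cons.injEq _ _ _ _ ▸ hs)
  simp only [List.cons.injEq] at hs
  exact hs.2.1

lemma adj_dist_ne (hT : G.IsTree) {u v : V} (h : G.Adj u v) (x : V) :
    G.dist x u ≠ G.dist x v := by
  intro heq
  obtain ⟨P, hPp, hPl⟩ := exists_path_length hT.isConnected x u
  by_cases hv : v ∈ P.support
  · have hd := SimpleGraph.dist_le (P.takeUntil v hv)
    have hspec := congrArg Walk.length (P.take_spec hv)
    rw [Walk.length_append] at hspec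
    have hdrop : (P.dropUntil v hv).length ≠ 0 := fun h0 =>
      h.ne' (Walk.eq_of_length_eq_zero h0)
    have hta := Walk.length_takeUntil_le P hv
    omega
  · have hrev : (Walk.cons h.symm P.reverse).IsPath := by
      refine hPp.reverse.cons ?_
      rwa [Walk.support_reverse, List.mem_reverse]
    have hP2 : (Walk.cons h.symm P.reverse).reverse.IsPath := hrev.reverse
    obtain ⟨Q, hQp, hQl⟩ := exists_path_length hT.isConnected x v
    obtain ⟨R, -, huniq⟩ := hT.existsUnique_path x v
    have he : (Walk.cons h.symm P.reverse).reverse = Q := (huniq _ hP2).trans (huniq _ hQp).symm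
    have hlen := congrArg Walk.length he
    simp only [Walk.length_reverse, Walk.length_cons] at hlen
    omega

end Stmt17Aux

section Main

open Equiv Equiv.Perm Finset Stmt17Aux

theorem stmt17 (n : ℕ) (T : SimpleGraph (Fin n)) (hT : T.IsTree)
    (p : Equiv.Perm (Fin n)) (hp : p ≠ 1) :
    ∃ u v : Fin n, T.Adj u v ∧
      ((((p * Equiv.swap u v).cycleFactorsFinset.card +
          (Finset.univ.filter fun x => (p * Equiv.swap u v) x = x).card : ℕ) : ℤ)
        - n + ∑ i : Fin n, (T.dist i ((p * Equiv.swap u v) i) : ℤ)) <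
      ((((p.cycleFactorsFinset.card +
          (Finset.univ.filter fun x => p x = x).card : ℕ)) : ℤ)
        - n + ∑ i : Fin n, (T.dist i (p i) : ℤ)) := by
  have hc := hT.isConnected
  obtain ⟨x₀, hx₀⟩ : ∃ x, p x ≠ x := by
    by_contra hall
    push_neg at hall
    exact hp (Equiv.ext fun x => by simp [hall x])
  have harrow : ∀ x : Fin n, ∃ w, p x ≠ x →
      T.Adj x w ∧ T.dist w (p x) + 1 = T.dist x (p x) := by
    intro x
    by_cases h : p x = x
    · exact ⟨x, fun hx => absurd h hx⟩
    · obtain ⟨w, hw⟩ := exists_closer hc (fun he => h he.symm)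
      exact ⟨w, fun _ => hw⟩
  choose a ha using harrow
  have hbridge : ∀ r : Equiv.Perm (Fin n),
      r.cycleFactorsFinset.card + (Finset.univ.filter fun x => r x = x).card =
        (mins r.SameCycle).card := fun r => (card_mins r).symm
  by_cases hA : ∃ x, p x ≠ x ∧ p (a x) ≠ a x ∧ a (a x) = x
  · obtain ⟨u, hu, hv, hmut⟩ := hA
    have hadj : T.Adj u (a u) := (ha u hu).1
    refine ⟨u, a u, hadj, ?_⟩
    set v := a u with hvdef
    have huv : u ≠ v := hadj.ne
    have d1 : T.dist v (p u) + 1 = T.dist u (p u) := (ha u hu).2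
    have d2 : T.dist u (p v) + 1 = T.dist v (p v) := by
      have h := (ha v hv).2
      rwa [hmut] at h
    set q := p * Equiv.swap u v with hqdef
    have hqu : q u = p v := by simp [hqdef]
    have hqv : q v = p u := by simp [hqdef]
    have hqother : ∀ i, i ≠ u → i ≠ v → q i = p i := fun i hi1 hi2 => by
      simp [hqdef, Equiv.Perm.mul_apply, Equiv.swap_apply_of_ne_of_ne hi1 hi2]
    have hsum : ∑ i : Fin n, (T.dist i (q i) : ℤ) =
        (∑ i : Fin n, (T.dist i (p i) : ℤ)) - 2 := by
      have hzero : ∀ i ∈ Finset.univ, i ∉ ({u, v} : Finset (Fin n)) →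
          (T.dist i (q i) : ℤ) - (T.dist i (p i) : ℤ) = 0 := by
        intro i _ hi
        rw [Finset.mem_insert, Finset.mem_singleton] at hi
        push_neg at hi
        rw [hqother i hi.1 hi.2]
        ring
      have hsub := Finset.sum_subset (Finset.subset_univ ({u, v} : Finset (Fin n))) hzero
      have hpair : ∑ i ∈ ({u, v} : Finset (Fin n)),
          ((T.dist i (q i) : ℤ) - (T.dist i (p i) : ℤ)) = -2 := by
        rw [Finset.sum_pair huv, hqu, hqv]
        have e1 : (T.dist v (p u) : ℤ) + 1 = T.dist u (p u) := by exact_mod_cast d1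
        have e2 : (T.dist u (p v) : ℤ) + 1 = T.dist v (p v) := by exact_mod_cast d2
        linarith
      have htot : ∑ i : Fin n, ((T.dist i (q i) : ℤ) - (T.dist i (p i) : ℤ)) = -2 := by
        rw [← hsub]
        exact hpair
      rw [Finset.sum_sub_distrib] at htot
      linarith
    have hcard : (mins q.SameCycle).card ≤ (mins p.SameCycle).card + 1 := card_split p u v
    rw [hbridge q, hbridge p, hsum]
    have hcast : ((mins q.SameCycle).card : ℤ) ≤ (mins p.SameCycle).card + 1 := by
      exact_mod_cast hcard
    linarith
  by_cases hB : ∃ x, p x ≠ x ∧ p (a x) = a x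
  · obtain ⟨v, hv, hw⟩ := hB
    have hadj : T.Adj v (a v) := (ha v hv).1
    refine ⟨v, a v, hadj, ?_⟩
    set w := a v with hwdef
    have hvw : v ≠ w := hadj.ne
    have d1 : T.dist w (p v) + 1 = T.dist v (p v) := (ha v hv).2
    set q := p * Equiv.swap v w with hqdef
    have hqv : q v = w := by simp [hqdef, hw]
    have hqw : q w = p v := by simp [hqdef]
    have hqother : ∀ i, i ≠ v → i ≠ w → q i = p i := fun i hi1 hi2 => by
      simp [hqdef, Equiv.Perm.mul_apply, Equiv.swap_apply_of_ne_of_ne hi1 hi2]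
    have hsum : ∑ i : Fin n, (T.dist i (q i) : ℤ) = ∑ i : Fin n, (T.dist i (p i) : ℤ) := by
      have hzero : ∀ i ∈ Finset.univ, i ∉ ({v, w} : Finset (Fin n)) →
          (T.dist i (q i) : ℤ) - (T.dist i (p i) : ℤ) = 0 := by
        intro i _ hi
        rw [Finset.mem_insert, Finset.mem_singleton] at hi
        push_neg at hi
        rw [hqother i hi.1 hi.2]
        ring
      have hsub := Finset.sum_subset (Finset.subset_univ ({v, w} : Finset (Fin n))) hzero
      have hpair : ∑ i ∈ ({v, w} : Finset (Fin n)),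
          ((T.dist i (q i) : ℤ) - (T.dist i (p i) : ℤ)) = 0 := by
        rw [Finset.sum_pair hvw, hqv, hqw]
        have e1 : (T.dist w (p v) : ℤ) + 1 = T.dist v (p v) := by exact_mod_cast d1
        have e2 : (T.dist v w : ℤ) = 1 := by
          exact_mod_cast SimpleGraph.dist_eq_one_iff_adj.mpr hadj
        have e3 : (T.dist w (p w) : ℤ) = 0 := by
          rw [hw]
          exact_mod_cast SimpleGraph.dist_self
        linarith
      have htot : ∑ i : Fin n, ((T.dist i (q i) : ℤ) - (T.dist i (p i) : ℤ)) = 0 := by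
        rw [← hsub]
        exact hpair
      rw [Finset.sum_sub_distrib] at htot
      linarith
    have hcard : (mins q.SameCycle).card + 1 ≤ (mins p.SameCycle).card := card_merge p hw hvw
    rw [hbridge q, hbridge p, hsum]
    have hcast : ((mins q.SameCycle).card : ℤ) + 1 ≤ (mins p.SameCycle).card := by
      exact_mod_cast hcard
    linarith
  · -- contradiction case
    exfalso
    push_neg at hA hB
    set u : ℕ → Fin n := fun k => a^[k] x₀ with hudef
    have hustep : ∀ k, u (k+1) = a (u k) := fun k => Function.iterate_succ_apply' a k x₀
    have hinv : ∀ k, (p (u k) ≠ u k ∧ T.dist x₀ (u k) = k) ∧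
        (p (u (k+1)) ≠ u (k+1) ∧ T.dist x₀ (u (k+1)) = k+1) := by
      intro k
      induction k with
      | zero =>
        have hu0 : u 0 = x₀ := rfl
        have hu1 : u 1 = a x₀ := by rw [hustep 0, hu0]
        refine ⟨⟨by rw [hu0]; exact hx₀, by rw [hu0]; exact SimpleGraph.dist_self⟩, ?_⟩
        rw [hu1]
        exact ⟨hB x₀ hx₀, SimpleGraph.dist_eq_one_iff_adj.mpr (ha x₀ hx₀).1⟩
      | succ k ih =>
        obtain ⟨⟨hbk, hdk⟩, hbk1, hdk1⟩ := ih
        refine ⟨⟨hbk1, hdk1⟩, ?_⟩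
        have hck1 : u (k+1) = a (u k) := hustep k
        have hck2 : u (k+2) = a (u (k+1)) := hustep (k+1)
        have hnf2 : p (u (k+2)) ≠ u (k+2) := by
          rw [hck2]
          exact hB _ hbk1
        refine ⟨hnf2, ?_⟩
        have hadj2 : T.Adj (u (k+1)) (u (k+2)) := by
          rw [hck2]
          exact (ha _ hbk1).1
        have hadj1 : T.Adj (u k) (u (k+1)) := by
          rw [hck1]
          exact (ha _ hbk).1
        have hne : u (k+2) ≠ u k := by
          rw [hck2, hck1]
          rw [hck1] at hbk1
          exact hA (u k) hbk hbk1
        -- distance facts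
        have hne_d : T.dist x₀ (u (k+2)) ≠ k + 1 := by
          intro h
          have := adj_dist_ne hT hadj2 x₀
          rw [hdk1, h] at this
          exact this rfl
        have htri1 : T.dist x₀ (u (k+1)) ≤ T.dist x₀ (u (k+2)) + T.dist (u (k+2)) (u (k+1)) :=
          hc.dist_triangle
        have htri2 : T.dist x₀ (u (k+2)) ≤ T.dist x₀ (u (k+1)) + T.dist (u (k+1)) (u (k+2)) :=
          hc.dist_triangle
        have hadj_d : T.dist (u (k+1)) (u (k+2)) = 1 :=
          SimpleGraph.dist_eq_one_iff_adj.mpr hadj2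
        have hadj_d' : T.dist (u (k+2)) (u (k+1)) = 1 := by
          rw [SimpleGraph.dist_comm]
          exact hadj_d
        have hnotlow : T.dist x₀ (u (k+2)) ≠ k := by
          intro h
          apply hne
          refine closer_unique (y := x₀) hT hadj2 hadj1.symm ?_ ?_
          · have c1 : T.dist (u (k+2)) x₀ = T.dist x₀ (u (k+2)) := SimpleGraph.dist_comm
            have c2 : T.dist (u (k+1)) x₀ = T.dist x₀ (u (k+1)) := SimpleGraph.dist_comm
            omega
          · have c1 : T.dist (u k) x₀ = T.dist x₀ (u k) := SimpleGraph.dist_comm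
            have c2 : T.dist (u (k+1)) x₀ = T.dist x₀ (u (k+1)) := SimpleGraph.dist_comm
            omega
        show T.dist x₀ (u (k + 2)) = k + 2
        omega
    have hinj : Function.Injective (fun k : Fin (n+1) => u k) := by
      intro j k h
      have hj := (hinv j).1.2
      have hk := (hinv k).1.2
      simp only at h
      rw [h] at hj
      exact Fin.ext (hj.symm.trans hk)
    have := Fintype.card_le_of_injective _ hinj
    simp at this

end Main
end

section
/- For a tree T on n vertices with vertex set {1,...,n} and any permutation p ∈ S_n, the quantity c(p) − n + Σ_{i=1}^n d(i, p(i)) is nonnegative, where c(p) is the number of cycles of p including fixed points and d is the tree distance. -/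
theorem stmt19 (n : ℕ) (T : SimpleGraph (Fin n)) (hT : T.IsTree)
    (p : Equiv.Perm (Fin n)) :
    0 ≤ ((p.cycleFactorsFinset.card +
          (Finset.univ.filter fun x => p x = x).card : ℕ) : ℤ)
        - n + ∑ i : Fin n, (T.dist i (p i) : ℤ) := by
  have hconn : T.Connected := hT.isConnected
  have key : ((Finset.univ.filter fun x => ¬ p x = x).card : ℤ)
      ≤ ∑ i : Fin n, (T.dist i (p i) : ℤ) := by
    calc ((Finset.univ.filter fun x => ¬ p x = x).card : ℤ)
        = ∑ _i ∈ Finset.univ.filter fun x => ¬ p x = x, (1 : ℤ) := by simp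
      _ ≤ ∑ i ∈ Finset.univ.filter fun x => ¬ p x = x, (T.dist i (p i) : ℤ) := by
          refine Finset.sum_le_sum fun i hi => ?_
          have hne : i ≠ p i := by
            simp only [Finset.mem_filter] at hi
            exact fun h => hi.2 h.symm
          have := hconn.pos_dist_of_ne hne
          exact_mod_cast this
      _ ≤ ∑ i : Fin n, (T.dist i (p i) : ℤ) := by
          refine Finset.sum_le_sum_of_subset_of_nonneg (Finset.filter_subset _ _)
            fun i _ _ => by positivity
  have hcard : (Finset.univ.filter fun x => p x = x).card
      + (Finset.univ.filter fun x => ¬ p x = x).card = n := by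
    rw [Finset.card_filter_add_card_filter_not]
    simp
  have hc : (0 : ℤ) ≤ (p.cycleFactorsFinset.card : ℤ) := by positivity
  push_cast
  linarith
end
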